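/- arXiv:2310.15545 — 2 statements merged into one kernel-verified Lean document; each statement's English description precedes it below -/
import Mathlib

section
/- Let R = ℤ[[t]] and consider finite-index ideals of R. The Solomon zeta function ζ(R; s) = Σ_X [R : X]^{−s}, the sum over finite-index ideals X ⊆ R, satisfies the formal Dirichlet series identity ζ(R; s) = Π_{j=1}^{∞} ζ(js − j + 1), where ζ(s) denotes the Riemann zeta function as a formal Dirichlet series Σ_n n^{−s}. -/
/-- The formal Dirichlet series `ζ(js - j + 1) = ∑_m m^{-(js-j+1)} = ∑_m m^{j-1} (m^j)^{-s}`,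
as an arithmetic function: its value at `n` is `m^{j-1}` if `n = m^j` (for some `m ≥ 1`)
and `0` otherwise. -/
def zetaShifted (j : ℕ) : ArithmeticFunction ℕ :=
  ⟨fun n => ∑ m ∈ Finset.range (n + 1), if m ^ j = n ∧ 1 ≤ m then m ^ (j - 1) else 0,
    by simp⟩

/-!
For an ideal `I` of finite index in `R = ℤ⟦X⟧` let `m(I)` be the index in `ℤ` of its ideal of
constant coefficients and `I' = (I : X)`. Multiplication by `X` identifies `R ⧸ I'` with
`(I + X R) ⧸ I`, so `[R : I] = m(I) [R : I']`, and `m(I') ∣ m(I)`. Conversely, over a given `I'`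
the ideals `I` with `(I : X) = I'` and `m(I) = m`, for a multiple `m` of `m(I')`, are the ideals
`(f) + X I'` with `f ∈ I'` of constant coefficient `m`; they form a torsor under `(I' : X) ⧸ I'`,
a group of order `m(I')`. Hence the number `C(m, d)` of ideals with `m(I) = m` and index `d`
satisfies `C(m, m d) = ∑_{c ∣ m} c C(c, d)`. In terms of the series
`F_i(s) = ∑_I m(I)^i (m(I)^i [R : I])^{-s}` this recursion reads `F_i = ζ((i+1)s - i) F_{i+1}`;
`F_0` is the ideal zeta function of `R`, and `F_K(s) = 1 + O(2^{-(K+1)s})`.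
-/

lemma Nat.card_subtype_eq_sum_card_fiberwise {α β : Type*} [DecidableEq β] {p : α → Prop}
    (hp : {a | p a}.Finite) (f : α → β) {t : Finset β} (hf : ∀ a, p a → f a ∈ t) :
    Nat.card {a // p a} = ∑ b ∈ t, Nat.card {a // p a ∧ f a = b} := by
  classical
  have : Fintype {a // p a} := hp.fintype
  rw [Nat.card_eq_fintype_card, ← Finset.card_univ,
    Finset.card_eq_sum_card_fiberwise (f := fun a : {a // p a} ↦ f a) fun a _ ↦ hf a a.2]
  refine Finset.sum_congr rfl fun b _ ↦ ?_
  rw [← Fintype.card_subtype, ← Nat.card_eq_fintype_card]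
  exact Nat.card_congr (Equiv.subtypeSubtypeEquivSubtypeInter p (f · = b))

section TwistedSeries

open ArithmeticFunction Finset

lemma zetaShifted_apply_pow (i : ℕ) {κ : ℕ} (hκ : κ ≠ 0) :
    zetaShifted (i + 1) (κ ^ (i + 1)) = κ ^ i := by
  show ∑ m ∈ range (κ ^ (i + 1) + 1), _ = _
  rw [sum_eq_single κ]
  · simp [Nat.one_le_iff_ne_zero.2 hκ]
  · intro m _ hm
    rw [if_neg fun h ↦ hm (Nat.pow_left_injective i.succ_ne_zero h.1)]
  · simp [Nat.le_self_pow i.succ_ne_zero]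

lemma exists_pow_eq_of_zetaShifted_ne_zero {i a : ℕ} (h : zetaShifted (i + 1) a ≠ 0) :
    ∃ κ ≠ 0, κ ^ (i + 1) = a := by
  obtain ⟨κ, -, hκ⟩ := exists_ne_zero_of_sum_ne_zero (s := range (a + 1)) h
  obtain ⟨hpow, hκ1⟩ := (ite_ne_right_iff.1 hκ).1
  exact ⟨κ, Nat.one_le_iff_ne_zero.1 hκ1, hpow⟩

lemma zetaShifted_mul_apply (i : ℕ) (f : ArithmeticFunction ℕ) (n : ℕ) :
    (zetaShifted (i + 1) * f) n =
      ∑ κ ∈ n.divisors, if κ ^ (i + 1) ∣ n then κ ^ i * f (n / κ ^ (i + 1)) else 0 := by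
  rw [mul_apply, Nat.sum_divisorsAntidiagonal fun a b ↦ zetaShifted (i + 1) a * f b]
  symm
  refine sum_bij_ne_zero (fun κ _ _ ↦ κ ^ (i + 1)) ?_ ?_ ?_ ?_
  · intro κ hκ hne
    have hdvd := (ite_ne_right_iff.1 hne).1
    exact Nat.mem_divisors.2 ⟨hdvd, Nat.ne_zero_of_mem_divisors hκ⟩
  · intro κ₁ _ _ κ₂ _ _ h
    exact Nat.pow_left_injective i.succ_ne_zero h
  · intro a ha hne
    obtain ⟨κ, hκ, rfl⟩ := exists_pow_eq_of_zetaShifted_ne_zero (left_ne_zero_of_mul hne)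
    have hdvd := Nat.dvd_of_mem_divisors ha
    refine ⟨κ, Nat.mem_divisors.2 ⟨(dvd_pow_self κ i.succ_ne_zero).trans hdvd,
      Nat.ne_zero_of_mem_divisors ha⟩, ?_, rfl⟩
    rwa [if_pos hdvd, ← zetaShifted_apply_pow i hκ]
  · intro κ hκ hne
    have hdvd := (ite_ne_right_iff.1 hne).1
    rw [if_pos hdvd, zetaShifted_apply_pow i (Nat.pos_of_mem_divisors hκ).ne']

lemma ArithmeticFunction.mul_apply_of_eq_one_on_divisors {f g : ArithmeticFunction ℕ} {n : ℕ}
    (hn : n ≠ 0) (hg : ∀ e ∈ n.divisors, g e = if e = 1 then 1 else 0) : (f * g) n = f n := by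
  rw [mul_apply, Nat.sum_divisorsAntidiagonal' fun a b ↦ f a * g b, sum_eq_single 1]
  · simp [hg 1 (Nat.one_mem_divisors.2 hn)]
  · intro e he he1
    simp [hg e he, he1]
  · simp [hn]

lemma sum_divisors_ite_dvd_eq_sum_mul {n c : ℕ} (hc : c ≠ 0) {φ : ℕ → ℕ}
    (hφ : ∀ m, ¬ m ∣ n → φ m = 0) :
    ∑ m ∈ n.divisors, (if c ∣ m then φ m else 0) = ∑ κ ∈ n.divisors, φ (κ * c) := by
  symm
  refine sum_bij_ne_zero (fun κ _ _ ↦ κ * c) ?_ ?_ ?_ ?_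
  · intro κ hκ hne
    exact Nat.mem_divisors.2 ⟨not_not.1 (mt (hφ _) hne), Nat.ne_zero_of_mem_divisors hκ⟩
  · intro κ₁ _ _ κ₂ _ _ h
    exact Nat.eq_of_mul_eq_mul_right (Nat.pos_of_ne_zero hc) h
  · intro m hm hne
    obtain ⟨hcm, hne⟩ := ite_ne_right_iff.1 hne
    obtain ⟨κ, rfl⟩ := hcm
    rw [mul_comm] at hm hne ⊢
    exact ⟨κ, Nat.mem_divisors.2 ⟨(dvd_mul_right κ c).trans (Nat.dvd_of_mem_divisors hm),
      Nat.ne_zero_of_mem_divisors hm⟩, hne, rfl⟩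
  · intro κ _ _
    rw [if_pos (dvd_mul_left c κ)]

variable (C : ℕ → ℕ → ℕ)

/-- The Dirichlet series `∑_{m,d} C m d · m ^ i · (m ^ i d) ^ (-s)`. -/
def twistedSeries (i : ℕ) : ArithmeticFunction ℕ :=
  ⟨fun n ↦ ∑ m ∈ n.divisors, if m ^ i ∣ n then m ^ i * C m (n / m ^ i) else 0, by simp⟩

variable {C}

lemma twistedSeries_apply (i n : ℕ) : twistedSeries C i n =
    ∑ m ∈ n.divisors, if m ^ i ∣ n then m ^ i * C m (n / m ^ i) else 0 := rfl

lemma twistedSeries_apply_eq_sum_sum (hvanish : ∀ m d, ¬ m ∣ d → C m d = 0)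
    (hrec : ∀ m d, m ≠ 0 → d ≠ 0 → C m (m * d) = ∑ c ∈ m.divisors, c * C c d) (i : ℕ) {n : ℕ}
    (hn : n ≠ 0) :
    twistedSeries C i n = ∑ m ∈ n.divisors, ∑ c ∈ n.divisors, if c ∣ m then
      (if m ^ (i + 1) ∣ n then m ^ i * (c * C c (n / m ^ (i + 1))) else 0) else 0 := by
  rw [twistedSeries_apply]
  refine sum_congr rfl fun m hm ↦ ?_
  have hm0 : m ≠ 0 := (Nat.pos_of_mem_divisors hm).ne'
  by_cases h : m ^ (i + 1) ∣ n
  · obtain ⟨e, rfl⟩ := h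
    have hpos : 0 < m := Nat.pos_of_ne_zero hm0
    have hdiv : m ^ (i + 1) * e / m ^ i = m * e := by
      rw [pow_succ, mul_assoc, Nat.mul_div_cancel_left _ (pow_pos hpos i)]
    have hmn : m ∣ m ^ (i + 1) * e := (dvd_pow_self m i.succ_ne_zero).mul_right e
    simp only [if_pos (dvd_mul_right (m ^ (i + 1)) e), Nat.mul_div_cancel_left e (pow_pos hpos _)]
    rw [if_pos ((pow_dvd_pow m i.le_succ).mul_right e), hdiv,
      hrec m e hm0 (right_ne_zero_of_mul hn), mul_sum, ← Nat.divisors_filter_dvd_of_dvd hn hmn,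
      sum_filter]
  · simp only [if_neg h, ite_self, sum_const_zero]
    refine ite_eq_right_iff.2 fun hi ↦ ?_
    rw [hvanish _ _ fun hdvd ↦ h (pow_succ m i ▸ Nat.mul_dvd_of_dvd_div hi hdvd), mul_zero]

lemma zetaShifted_mul_twistedSeries_apply (i : ℕ) {n : ℕ} (hn : n ≠ 0) :
    (zetaShifted (i + 1) * twistedSeries C (i + 1)) n = ∑ κ ∈ n.divisors, ∑ c ∈ n.divisors,
      if (κ * c) ^ (i + 1) ∣ n then κ ^ i * (c ^ (i + 1) * C c (n / (κ * c) ^ (i + 1))) else 0 := by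
  rw [zetaShifted_mul_apply]
  refine sum_congr rfl fun κ _ ↦ ?_
  by_cases hκ : κ ^ (i + 1) ∣ n
  · have he : n / κ ^ (i + 1) ∣ n := Nat.div_dvd_of_dvd hκ
    rw [if_pos hκ, twistedSeries_apply, mul_sum, sum_subset (Nat.divisors_subset_of_dvd hn he)]
    · refine sum_congr rfl fun c _ ↦ ?_
      simp only [Nat.dvd_div_iff_mul_dvd hκ, Nat.div_div_eq_div_mul, ← mul_pow, mul_ite, mul_zero]
    · intro c _ hc
      rw [if_neg fun h ↦ hc (Nat.mem_divisors.2 ⟨(dvd_pow_self c i.succ_ne_zero).trans h,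
        ne_zero_of_dvd_ne_zero hn he⟩), mul_zero]
  · rw [if_neg hκ]
    refine (sum_eq_zero fun c _ ↦ if_neg fun h ↦ hκ ?_).symm
    exact (pow_dvd_pow_of_dvd (dvd_mul_right κ c) _).trans h

theorem twistedSeries_eq_zetaShifted_mul (hvanish : ∀ m d, ¬ m ∣ d → C m d = 0)
    (hrec : ∀ m d, m ≠ 0 → d ≠ 0 → C m (m * d) = ∑ c ∈ m.divisors, c * C c d) (i : ℕ) :
    twistedSeries C i = zetaShifted (i + 1) * twistedSeries C (i + 1) := by
  ext n
  rcases eq_or_ne n 0 with rfl | hn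
  · simp
  rw [twistedSeries_apply_eq_sum_sum hvanish hrec i hn,
    zetaShifted_mul_twistedSeries_apply i hn, sum_comm]
  conv_rhs => rw [sum_comm]
  -- For fixed `c`, substitute `m = κ c` on the left.
  refine sum_congr rfl fun c hc ↦ ?_
  rw [sum_divisors_ite_dvd_eq_sum_mul (Nat.pos_of_mem_divisors hc).ne' fun m hm ↦
    if_neg fun h ↦ hm ((dvd_pow_self m i.succ_ne_zero).trans h)]
  refine sum_congr rfl fun κ _ ↦ ?_
  split_ifs
  · ring
  · rfl

theorem twistedSeries_zero_eq_prod_mul (hvanish : ∀ m d, ¬ m ∣ d → C m d = 0)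
    (hrec : ∀ m d, m ≠ 0 → d ≠ 0 → C m (m * d) = ∑ c ∈ m.divisors, c * C c d) (K : ℕ) :
    twistedSeries C 0 = (∏ j ∈ Icc 1 K, zetaShifted j) * twistedSeries C K := by
  induction K with
  | zero => simp
  | succ K ih =>
    rw [prod_Icc_succ_top (Nat.le_add_left 1 K), ih,
      twistedSeries_eq_zetaShifted_mul hvanish hrec K, mul_assoc]

lemma twistedSeries_zero_apply (n : ℕ) : twistedSeries C 0 n = ∑ m ∈ n.divisors, C m n := by
  simp [twistedSeries_apply]

lemma twistedSeries_apply_of_lt_two_pow (hvanish : ∀ m d, ¬ m ∣ d → C m d = 0)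
    (hone : ∀ d, C 1 d = if d = 1 then 1 else 0) {K e : ℕ} (he : e ≠ 0) (hlt : e < 2 ^ (K + 1)) :
    twistedSeries C K e = if e = 1 then 1 else 0 := by
  rw [twistedSeries_apply, sum_eq_single 1]
  · simp [hone]
  · intro m hm hm1
    have hm2 : 2 ≤ m := by
      have := Nat.pos_of_mem_divisors hm
      omega
    refine ite_eq_right_iff.2 fun hdvd ↦ ?_
    rw [hvanish, mul_zero]
    intro hm'
    have hle : m ^ (K + 1) ≤ e :=
      Nat.le_of_dvd (Nat.pos_of_ne_zero he) (pow_succ m K ▸ Nat.mul_dvd_of_dvd_div hdvd hm')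
    have := Nat.pow_le_pow_left hm2 (K + 1)
    omega
  · simp [he]

end TwistedSeries

section IdealsOfIntPowerSeries

open PowerSeries

noncomputable def constantCoeffIndex (I : Ideal ℤ⟦X⟧) : ℕ :=
  Ideal.absNorm (I.map (constantCoeff (R := ℤ)))

variable {I J : Ideal ℤ⟦X⟧} {f : ℤ⟦X⟧}

lemma span_constantCoeffIndex (I : Ideal ℤ⟦X⟧) :
    Ideal.span {(constantCoeffIndex I : ℤ)} = I.map constantCoeff :=
  Int.ideal_span_absNorm_eq_self _

lemma constantCoeffIndex_dvd (hf : f ∈ I) :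
    (constantCoeffIndex I : ℤ) ∣ constantCoeff f := by
  rw [← Ideal.mem_span_singleton, span_constantCoeffIndex]
  exact Ideal.mem_map_of_mem _ hf

lemma exists_mem_constantCoeff_eq (I : Ideal ℤ⟦X⟧) :
    ∃ f ∈ I, constantCoeff f = constantCoeffIndex I :=
  (Ideal.mem_map_iff_of_surjective _ constantCoeff_surj).1
    (span_constantCoeffIndex I ▸ Ideal.mem_span_singleton_self _)

lemma constantCoeffIndex_dvd_of_le (h : I ≤ J) :
    constantCoeffIndex J ∣ constantCoeffIndex I := by
  obtain ⟨f, hf, hcf⟩ := exists_mem_constantCoeff_eq I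
  exact_mod_cast hcf ▸ constantCoeffIndex_dvd (h hf)

lemma constantCoeffIndex_eq_one_iff : constantCoeffIndex I = 1 ↔ I = ⊤ := by
  refine ⟨fun h ↦ ?_, fun h ↦ by simp [h, constantCoeffIndex, Ideal.map_top]⟩
  obtain ⟨f, hf, hcf⟩ := exists_mem_constantCoeff_eq I
  exact I.eq_top_of_isUnit_mem hf (isUnit_iff_constantCoeff.2 (by simp [hcf, h]))

lemma toAddSubgroup_ker_constantCoeff :
    (RingHom.ker (constantCoeff (R := ℤ))).toAddSubgroup = (AddMonoidHom.mulLeft X).range := by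
  ext f
  rw [Submodule.mem_toAddSubgroup, RingHom.mem_ker, ← X_dvd_iff, AddMonoidHom.mem_range]
  simp [dvd_def, eq_comm]

lemma toAddSubgroup_colon_X (I : Ideal ℤ⟦X⟧) :
    (I.colon {X}).toAddSubgroup = I.toAddSubgroup.comap (AddMonoidHom.mulLeft X) := by
  ext f
  simp [mul_comm]

lemma card_quotient_eq_constantCoeffIndex_mul (I : Ideal ℤ⟦X⟧) :
    Nat.card (ℤ⟦X⟧ ⧸ I) = constantCoeffIndex I * Nat.card (ℤ⟦X⟧ ⧸ I.colon {X}) := by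
  have hsup : I ⊔ RingHom.ker constantCoeff = (I.map constantCoeff).comap constantCoeff :=
    (Ideal.comap_map_of_surjective' _ constantCoeff_surj I).symm
  have hmid : I.toAddSubgroup.relIndex (I ⊔ RingHom.ker constantCoeff).toAddSubgroup =
      (I.colon {X}).toAddSubgroup.index := by
    rw [Submodule.sup_toAddSubgroup, AddSubgroup.relIndex_sup_left,
      toAddSubgroup_ker_constantCoeff, toAddSubgroup_colon_X, AddSubgroup.index_comap]
  calc Nat.card (ℤ⟦X⟧ ⧸ I) = I.toAddSubgroup.index := rfl
    _ = _ := (AddSubgroup.relIndex_mul_index (H := I.toAddSubgroup)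
          (K := (I ⊔ RingHom.ker constantCoeff).toAddSubgroup) fun _ ↦ Ideal.mem_sup_left).symm
    _ = _ := by
      have hcomap : ((I.map constantCoeff).comap constantCoeff).toAddSubgroup =
          (I.map constantCoeff).toAddSubgroup.comap (constantCoeff (R := ℤ)).toAddMonoidHom := rfl
      rw [hmid, mul_comm, hsup, hcomap, AddSubgroup.index_comap_of_surjective _ constantCoeff_surj]
      rfl

lemma constantCoeffIndex_dvd_card_quotient (I : Ideal ℤ⟦X⟧) :
    constantCoeffIndex I ∣ Nat.card (ℤ⟦X⟧ ⧸ I) :=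
  Dvd.intro _ (card_quotient_eq_constantCoeffIndex_mul I).symm

lemma le_colon_X (I : Ideal ℤ⟦X⟧) : I ≤ I.colon {X} := fun _ hf ↦
  Submodule.mem_colon_singleton.2 (I.mul_mem_right X hf)

lemma relIndex_colon_X (hJ : Nat.card (ℤ⟦X⟧ ⧸ J) ≠ 0) :
    J.toAddSubgroup.relIndex (J.colon {X}).toAddSubgroup = constantCoeffIndex J := by
  have hle : J.toAddSubgroup ≤ (J.colon {X}).toAddSubgroup := le_colon_X J
  have hrel := AddSubgroup.relIndex_mul_index hle
  have hne : (J.colon {X}).toAddSubgroup.index ≠ 0 := fun h ↦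
    hJ (Nat.eq_zero_of_zero_dvd (h ▸ AddSubgroup.index_dvd_of_le hle))
  refine Nat.eq_of_mul_eq_mul_right (Nat.pos_of_ne_zero hne) ?_
  rw [hrel]
  exact card_quotient_eq_constantCoeffIndex_mul J

lemma X_pow_mem_of_mk_eq {i j : ℕ} (hij : i < j)
    (h : Ideal.Quotient.mk I (X ^ i) = Ideal.Quotient.mk I (X ^ j)) : X ^ i ∈ I := by
  have hu : IsUnit (1 - X ^ (j - i) : ℤ⟦X⟧) := by
    rw [isUnit_iff_constantCoeff]
    simp [zero_pow (Nat.sub_ne_zero_of_lt hij)]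
  rw [← Ideal.mul_unit_mem_iff_mem I hu, ← Ideal.Quotient.eq_zero_iff_mem]
  rw [mul_sub, mul_one, ← pow_add, Nat.add_sub_cancel' hij.le, map_sub, h, sub_self]

lemma X_pow_mem_of_card_quotient_eq {d : ℕ} (hd : d ≠ 0)
    (hI : Nat.card (ℤ⟦X⟧ ⧸ I) = d) : X ^ d ∈ I := by
  have : Finite (ℤ⟦X⟧ ⧸ I) := Nat.finite_of_card_ne_zero (hI ▸ hd)
  have : Fintype (ℤ⟦X⟧ ⧸ I) := Fintype.ofFinite _
  obtain ⟨i, j, hij, h⟩ := Fintype.exists_ne_map_eq_of_card_lt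
    (fun i : Fin (d + 1) ↦ Ideal.Quotient.mk I (X ^ (i : ℕ)))
    (by rw [Fintype.card_fin, ← Nat.card_eq_fintype_card, hI]; omega)
  have hpow : ∀ {i j : Fin (d + 1)}, i < j →
      Ideal.Quotient.mk I (X ^ (i : ℕ)) = Ideal.Quotient.mk I (X ^ (j : ℕ)) → X ^ d ∈ I :=
    fun {i j} hij h ↦ by
      rw [← Nat.sub_add_cancel (Nat.lt_succ_iff.1 i.2), pow_add]
      exact I.mul_mem_left _ (X_pow_mem_of_mk_eq hij h)
  rcases lt_or_gt_of_ne hij with hlt | hlt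
  exacts [hpow hlt h, hpow hlt h.symm]

lemma natCast_mem_of_card_quotient_eq {d : ℕ} (hI : Nat.card (ℤ⟦X⟧ ⧸ I) = d) :
    (d : ℤ⟦X⟧) ∈ I := by
  rw [← Ideal.Quotient.eq_zero_iff_mem, map_natCast, ← hI]
  exact Ideal.Quotient.index_eq_zero I

lemma mem_of_natCast_mem_of_X_pow_mem {d : ℕ} (hd : (d : ℤ⟦X⟧) ∈ I)
    (hX : X ^ d ∈ I) (hf : ∀ i < d, (d : ℤ) ∣ coeff i f) : f ∈ I := by
  obtain ⟨h, hh⟩ : X ^ d ∣ f - (d : ℤ⟦X⟧) * mk fun i ↦ coeff i f / d := by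
    refine X_pow_dvd_iff.2 fun i hi ↦ ?_
    rw [map_sub, ← map_natCast (C (R := ℤ)), coeff_C_mul, coeff_mk, Int.mul_ediv_cancel' (hf i hi),
      sub_self]
  rw [← sub_add_cancel f (d * _), hh]
  exact I.add_mem (I.mul_mem_right _ hX) (I.mul_mem_right _ hd)

noncomputable def truncCoeffMod (d : ℕ) : ℤ⟦X⟧ →+ (Fin d → ZMod d) :=
  AddMonoidHom.pi fun i ↦ (Int.castAddHom (ZMod d)).comp (coeff (i : ℕ)).toAddMonoidHom

lemma finite_setOf_card_quotient_eq {d : ℕ} (hd : d ≠ 0) :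
    {I : Ideal ℤ⟦X⟧ | Nat.card (ℤ⟦X⟧ ⧸ I) = d}.Finite := by
  have : NeZero d := ⟨hd⟩
  have hker {I : Ideal ℤ⟦X⟧} (hI : Nat.card (ℤ⟦X⟧ ⧸ I) = d) :
      (truncCoeffMod d).ker ≤ I.toAddSubgroup := fun f hf ↦
    mem_of_natCast_mem_of_X_pow_mem (natCast_mem_of_card_quotient_eq hI)
      (X_pow_mem_of_card_quotient_eq hd hI) fun i hi ↦
        (ZMod.intCast_zmod_eq_zero_iff_dvd _ _).1 (congrFun hf ⟨i, hi⟩)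
  refine Set.Finite.of_finite_image (Set.toFinite _)
    (f := fun I ↦ ((I.toAddSubgroup.map (truncCoeffMod d) : AddSubgroup _) : Set (Fin d → ZMod d)))
    fun I₁ hI₁ I₂ hI₂ h ↦ Submodule.toAddSubgroup_injective ?_
  rw [← AddSubgroup.comap_map_eq_self (hker hI₁), ← AddSubgroup.comap_map_eq_self (hker hI₂),
    SetLike.coe_injective h]

noncomputable def liftIdeal (J : Ideal ℤ⟦X⟧) (f : ℤ⟦X⟧) : Ideal ℤ⟦X⟧ :=
  Ideal.span {f} ⊔ Ideal.span {X} * J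

lemma mem_liftIdeal {x : ℤ⟦X⟧} :
    x ∈ liftIdeal J f ↔ ∃ a, ∃ y ∈ J, a * f + X * y = x := by
  simp only [liftIdeal, Submodule.mem_sup, Ideal.mem_span_singleton', Ideal.mem_span_singleton_mul]
  constructor
  · rintro ⟨_, ⟨a, rfl⟩, _, ⟨y, hy, rfl⟩, rfl⟩
    exact ⟨a, y, hy, rfl⟩
  · rintro ⟨a, y, hy, rfl⟩
    exact ⟨_, ⟨a, rfl⟩, _, ⟨y, hy, rfl⟩, rfl⟩

lemma self_mem_liftIdeal : f ∈ liftIdeal J f :=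
  mem_liftIdeal.2 ⟨1, 0, J.zero_mem, by simp⟩

lemma X_mul_mem_liftIdeal {y : ℤ⟦X⟧} (hy : y ∈ J) : X * y ∈ liftIdeal J f :=
  mem_liftIdeal.2 ⟨0, y, hy, by simp⟩

lemma map_constantCoeff_liftIdeal :
    (liftIdeal J f).map constantCoeff = Ideal.span {constantCoeff f} := by
  simp [liftIdeal, Ideal.map_sup, Ideal.map_mul, Ideal.map_span]

lemma constantCoeffIndex_liftIdeal :
    constantCoeffIndex (liftIdeal J f) = (constantCoeff f).natAbs := by
  rw [constantCoeffIndex, map_constantCoeff_liftIdeal]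
  simp

lemma colon_X_liftIdeal (hf : f ∈ J) (hf0 : constantCoeff f ≠ 0) :
    (liftIdeal J f).colon {X} = J := by
  refine le_antisymm (fun w hw ↦ ?_) fun y hy ↦
    Submodule.mem_colon_singleton.2 (by simpa [mul_comm] using X_mul_mem_liftIdeal hy)
  obtain ⟨a, y, hy, hXw⟩ := mem_liftIdeal.1 (Submodule.mem_colon_singleton.1 hw)
  have ha : constantCoeff a * constantCoeff f = 0 := by
    simpa using congrArg constantCoeff hXw
  obtain ⟨b, rfl⟩ := X_dvd_iff.2 ((mul_eq_zero.1 ha).resolve_right hf0)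
  rw [smul_eq_mul] at hXw
  have hw : w = b * f + y := mul_left_cancel₀ X_ne_zero (by linear_combination -hXw)
  exact hw ▸ J.add_mem (J.mul_mem_left b hf) hy

lemma liftIdeal_eq_of_sub_mem {f₁ f₂ : ℤ⟦X⟧} (h : f₁ - f₂ ∈ Ideal.span {X} * J) :
    liftIdeal J f₁ = liftIdeal J f₂ := by
  suffices ∀ f₁ f₂, f₁ - f₂ ∈ Ideal.span {X} * J → liftIdeal J f₁ ≤ liftIdeal J f₂ from
    le_antisymm (this _ _ h) (this _ _ (by simpa using neg_mem h))
  intro f₁ f₂ h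
  refine sup_le ((Ideal.span_singleton_le_iff_mem _).2 ?_) le_sup_right
  have h' : f₁ - f₂ ∈ liftIdeal J f₂ := Ideal.mem_sup_right h
  simpa using add_mem h' self_mem_liftIdeal

lemma eq_liftIdeal (hI : I.colon {X} = J) (hf : f ∈ I)
    (hcf : constantCoeff f = constantCoeffIndex I) : I = liftIdeal J f := by
  refine le_antisymm (fun x hx ↦ ?_) (sup_le ((Ideal.span_singleton_le_iff_mem _).2 hf) ?_)
  · obtain ⟨z, hz⟩ := constantCoeffIndex_dvd hx
    obtain ⟨w, hw⟩ := X_dvd_iff.2 (show constantCoeff (x - C z * f) = 0 by simp [hcf, hz, mul_comm])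
    have hwJ : w ∈ J := hI ▸ Submodule.mem_colon_singleton.2
      (by rw [smul_eq_mul, mul_comm, ← hw]; exact I.sub_mem hx (I.mul_mem_left _ hf))
    exact mem_liftIdeal.2 ⟨C z, w, hwJ, by rw [← hw]; ring⟩
  · rw [Ideal.span_singleton_mul_le_iff]
    intro y hy
    have := Submodule.mem_colon_singleton.1 (hI ▸ hy : y ∈ I.colon {X})
    rwa [smul_eq_mul, mul_comm] at this

lemma liftIdeal_add_X_mul_eq_iff {g h₁ h₂ : ℤ⟦X⟧} (hg : g ∈ J) (hg0 : constantCoeff g ≠ 0)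
    (hh₂ : h₂ ∈ J.colon {X}) :
    liftIdeal J (g + X * h₁) = liftIdeal J (g + X * h₂) ↔ h₁ - h₂ ∈ J := by
  refine ⟨fun heq ↦ ?_, fun h ↦
    liftIdeal_eq_of_sub_mem (Ideal.mem_span_singleton_mul.2 ⟨h₁ - h₂, h, by ring⟩)⟩
  have hmem : g + X * h₂ ∈ J :=
    J.add_mem hg (by simpa [mul_comm] using Submodule.mem_colon_singleton.1 hh₂)
  rw [← colon_X_liftIdeal hmem (by simpa using hg0), Submodule.mem_colon_singleton]
  have h₁mem : g + X * h₁ ∈ liftIdeal J (g + X * h₂) := heq ▸ self_mem_liftIdeal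
  convert sub_mem h₁mem self_mem_liftIdeal using 1
  rw [smul_eq_mul]
  ring

lemma exists_liftIdeal_add_X_mul_eq (hI : I.colon {X} = J) {g : ℤ⟦X⟧}
    (hg : g ∈ J) (hcg : constantCoeff g = constantCoeffIndex I) :
    ∃ h ∈ J.colon {X}, liftIdeal J (g + X * h) = I := by
  obtain ⟨f, hfI, hf⟩ := exists_mem_constantCoeff_eq I
  obtain ⟨h, hh⟩ := X_dvd_iff.2 (show constantCoeff (f - g) = 0 by rw [map_sub, hf, hcg, sub_self])
  refine ⟨h, Submodule.mem_colon_singleton.2 ?_, ?_⟩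
  · rw [smul_eq_mul, mul_comm, ← hh]
    exact J.sub_mem (hI ▸ le_colon_X I hfI) hg
  · rw [eq_liftIdeal hI hfI hf, ← hh, add_sub_cancel]

lemma card_fiber_colon_X (hJ : Nat.card (ℤ⟦X⟧ ⧸ J) ≠ 0) {m : ℕ} (hm : m ≠ 0)
    (hdvd : constantCoeffIndex J ∣ m) :
    Nat.card {I : Ideal ℤ⟦X⟧ // I.colon {X} = J ∧ constantCoeffIndex I = m} =
      constantCoeffIndex J := by
  obtain ⟨k, rfl⟩ := hdvd
  obtain ⟨g₀, hg₀J, hg₀⟩ := exists_mem_constantCoeff_eq J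
  set g : ℤ⟦X⟧ := k * g₀
  have hgJ : g ∈ J := J.mul_mem_left _ hg₀J
  have hg : constantCoeff g = (constantCoeffIndex J * k : ℕ) := by simp [g, hg₀, mul_comm]
  have hg0 : constantCoeff g ≠ 0 := by rw [hg]; exact_mod_cast hm
  -- The fibre is parametrised by `h ↦ (g + X h) + X J`, with `h ∈ (J : X)` taken modulo `J`.
  set H := (J.colon {X}).toAddSubgroup
  have hmem (h : H) : g + X * (h : ℤ⟦X⟧) ∈ J :=
    J.add_mem hgJ (by simpa [mul_comm] using Submodule.mem_colon_singleton.1 h.2)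
  let F (h : H) :
      {I : Ideal ℤ⟦X⟧ // I.colon {X} = J ∧ constantCoeffIndex I = constantCoeffIndex J * k} :=
    ⟨liftIdeal J (g + X * (h : ℤ⟦X⟧)), colon_X_liftIdeal (hmem h) (by simpa using hg0),
      by rw [constantCoeffIndex_liftIdeal]; simp [hg, Int.natAbs_mul]⟩
  have hF : Function.Surjective F := fun ⟨I, hIJ, hIm⟩ ↦
    have ⟨h, hh, hI⟩ := exists_liftIdeal_add_X_mul_eq hIJ hgJ (by rw [hg, hIm])
    ⟨⟨h, hh⟩, Subtype.ext hI⟩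
  have hker : Setoid.ker F = QuotientAddGroup.leftRel (J.toAddSubgroup.addSubgroupOf H) := by
    ext h₁ h₂
    rw [Setoid.ker_def, QuotientAddGroup.leftRel_apply, AddSubgroup.mem_addSubgroupOf,
      Subtype.ext_iff, eq_comm, liftIdeal_add_X_mul_eq_iff hgJ hg0 h₁.2, neg_add_eq_sub]
    rfl
  rw [← Nat.card_congr (Setoid.quotientKerEquivOfSurjective F hF), hker, ← relIndex_colon_X hJ]
  rfl

noncomputable def idealCount (m d : ℕ) : ℕ :=
  Nat.card {I : Ideal ℤ⟦X⟧ // constantCoeffIndex I = m ∧ Nat.card (ℤ⟦X⟧ ⧸ I) = d}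

lemma card_ideals_eq_sum_idealCount {n : ℕ} (hn : n ≠ 0) :
    Nat.card {I : Ideal ℤ⟦X⟧ // Nat.card (ℤ⟦X⟧ ⧸ I) = n} = ∑ m ∈ n.divisors, idealCount m n := by
  classical
  rw [Nat.card_subtype_eq_sum_card_fiberwise (finite_setOf_card_quotient_eq hn) constantCoeffIndex
    fun I hI ↦ Nat.mem_divisors.2 ⟨hI ▸ constantCoeffIndex_dvd_card_quotient I, hn⟩]
  exact Finset.sum_congr rfl fun m _ ↦ Nat.card_congr (Equiv.subtypeEquivRight fun _ ↦ and_comm)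

lemma idealCount_eq_zero_of_not_dvd {m d : ℕ} (h : ¬ m ∣ d) : idealCount m d = 0 :=
  Nat.card_eq_zero.2 <| .inl
    ⟨fun ⟨I, hm, hd⟩ ↦ h (hm ▸ hd ▸ constantCoeffIndex_dvd_card_quotient I)⟩

lemma idealCount_one_left (d : ℕ) : idealCount 1 d = if d = 1 then 1 else 0 := by
  simp only [idealCount, constantCoeffIndex_eq_one_iff]
  have htop : Nat.card (ℤ⟦X⟧ ⧸ (⊤ : Ideal ℤ⟦X⟧)) = 1 := by simp
  split_ifs with hd
  · exact Nat.card_eq_one_iff_unique.2 ⟨⟨fun a b ↦ Subtype.ext (a.2.1.trans b.2.1.symm)⟩,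
      ⟨⟨⊤, rfl, hd ▸ htop⟩⟩⟩
  · exact Nat.card_eq_zero.2 <| .inl ⟨fun ⟨I, hI, hId⟩ ↦ hd (hId ▸ hI ▸ htop)⟩

theorem idealCount_mul {m d : ℕ} (hm : m ≠ 0) (hd : d ≠ 0) :
    idealCount m (m * d) = ∑ c ∈ m.divisors, c * idealCount c d := by
  classical
  have hfin : {I : Ideal ℤ⟦X⟧ | constantCoeffIndex I = m ∧ Nat.card (ℤ⟦X⟧ ⧸ I) = m * d}.Finite :=
    (finite_setOf_card_quotient_eq (mul_ne_zero hm hd)).subset fun I hI ↦ hI.2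
  rw [idealCount, Nat.card_subtype_eq_sum_card_fiberwise hfin
    (fun I ↦ constantCoeffIndex (I.colon {X})) fun I hI ↦
      Nat.mem_divisors.2 ⟨hI.1 ▸ constantCoeffIndex_dvd_of_le (le_colon_X I), hm⟩]
  refine Finset.sum_congr rfl fun c hc ↦ ?_
  have hS : {J : Ideal ℤ⟦X⟧ | constantCoeffIndex J = c ∧ Nat.card (ℤ⟦X⟧ ⧸ J) = d}.Finite :=
    (finite_setOf_card_quotient_eq hd).subset fun J hJ ↦ hJ.2
  have hc : c ∣ m := Nat.dvd_of_mem_divisors hc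
  calc _ = ∑ J ∈ hS.toFinset, Nat.card {I : Ideal ℤ⟦X⟧ //
        ((constantCoeffIndex I = m ∧ Nat.card (ℤ⟦X⟧ ⧸ I) = m * d) ∧
          constantCoeffIndex (I.colon {X}) = c) ∧ I.colon {X} = J} :=
        Nat.card_subtype_eq_sum_card_fiberwise (hfin.subset fun I hI ↦ hI.1) _ fun I hI ↦ ?_
    _ = ∑ J ∈ hS.toFinset, c := Finset.sum_congr rfl fun J hJ ↦ ?_
    _ = c * idealCount c d := by
      rw [Finset.sum_const, smul_eq_mul, mul_comm, ← Nat.card_eq_card_finite_toFinset hS]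
      rfl
  · rw [Set.Finite.mem_toFinset]
    refine ⟨hI.2, Nat.eq_of_mul_eq_mul_left (Nat.pos_of_ne_zero hm) ?_⟩
    rw [← hI.1.1, ← card_quotient_eq_constantCoeffIndex_mul, hI.1.2, hI.1.1]
  · obtain ⟨hJc, hJd⟩ := (Set.Finite.mem_toFinset hS).1 hJ
    calc _ = Nat.card {I : Ideal ℤ⟦X⟧ // I.colon {X} = J ∧ constantCoeffIndex I = m} :=
          Nat.card_congr <| Equiv.subtypeEquivRight fun I ↦
            ⟨fun h ↦ ⟨h.2, h.1.1.1⟩, fun ⟨hIJ, hIm⟩ ↦ ⟨⟨⟨hIm, by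
              rw [card_quotient_eq_constantCoeffIndex_mul, hIm, hIJ, hJd]⟩, hIJ ▸ hJc⟩, hIJ⟩⟩
      _ = c := hJc ▸ card_fiber_colon_X (hJd ▸ hd) hm (hJc ▸ hc)

end IdealsOfIntPowerSeries

/-- The infinite product is encoded by its partial products: the `j`-th factor agrees with `1`
below `2 ^ j`. -/
theorem stmt_17 (a : ℕ → ℕ)
    (ha : ∀ n : ℕ, a n =
      Nat.card {X : Ideal (PowerSeries ℤ) // Nat.card (PowerSeries ℤ ⧸ X) = n}) :
    ∀ K n : ℕ, 1 ≤ n → n < 2 ^ (K + 1) →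
      (∏ j ∈ Finset.Icc 1 K, zetaShifted j) n = a n := by
  intro K n hn hlt
  have hn0 : n ≠ 0 := Nat.one_le_iff_ne_zero.1 hn
  rw [ha, card_ideals_eq_sum_idealCount hn0, ← twistedSeries_zero_apply,
    twistedSeries_zero_eq_prod_mul (fun _ _ ↦ idealCount_eq_zero_of_not_dvd)
      (fun _ _ ↦ idealCount_mul) K]
  refine (ArithmeticFunction.mul_apply_of_eq_one_on_divisors hn0 fun e he ↦ ?_).symm
  exact twistedSeries_apply_of_lt_two_pow (fun _ _ ↦ idealCount_eq_zero_of_not_dvd)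
    idealCount_one_left (Nat.pos_of_mem_divisors he).ne' ((Nat.divisor_le he).trans_lt hlt)
end

section
/- Let R be a left arithmetical ring: every simple left R-module is finite and finitely presented, and for each n there are finitely many isomorphism classes of simple left R-modules of cardinality n. Then for every finitely generated left R-module M and every positive integer n, the set of submodules X ⊆ M with |M/X| = n is finite. -/
/-!
Every submodule `X` of finite index `n > 1` in a finitely generated module `M` lies in a maximal
submodule `Y`, whose index `m > 1` divides `n`. The module `M ⧸ Y` is simple, hence finitely
presented, so `Y` is again finitely generated and `X` is a submodule of index `n / m` in it;
strong induction on `n` therefore reduces the claim to the finiteness of the set of maximal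
submodules of a given index. That set is finite because each such `Y` is the kernel of a map
from `M` to one of finitely many simple modules `R ⧸ I`, and there are only finitely many
linear maps from a finitely generated module to a finite one.
-/

universe u

section

variable {R : Type*} [Ring R]

def FinitelyManySimplesOfEachCard (R : Type*) [Ring R] : Prop :=
  ∀ n : ℕ, ∃ T : Set (Submodule R R), T.Finite ∧
    ∀ m : Submodule R R, IsCoatom m → Nat.card (R ⧸ m) = n →
      ∃ m' ∈ T, Nonempty ((R ⧸ m) ≃ₗ[R] (R ⧸ m'))

lemma Module.Finite.finite_linearMap (M N : Type*) [AddCommGroup M] [Module R M]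
    [AddCommGroup N] [Module R N] [Module.Finite R M] [Finite N] : Finite (M →ₗ[R] N) := by
  obtain ⟨s, hs⟩ := Module.Finite.fg_top (R := R) (M := M)
  refine _root_.Finite.of_injective (fun f : M →ₗ[R] N => fun x : s => f x) fun f g hfg => ?_
  exact LinearMap.ext_on hs fun x hx => congrFun hfg ⟨x, hx⟩

namespace Submodule

variable {M : Type*} [AddCommGroup M] [Module R M]

lemma card_quotient_comap_subtype_mul {X Y : Submodule R M} (h : X ≤ Y) :
    Nat.card (Y ⧸ X.comap Y.subtype) * Nat.card (M ⧸ Y) = Nat.card (M ⧸ X) :=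
  AddSubgroup.relIndex_mul_index (H := X.toAddSubgroup) (K := Y.toAddSubgroup) h

lemma card_quotient_eq_one_iff {X : Submodule R M} : Nat.card (M ⧸ X) = 1 ↔ X = ⊤ :=
  AddSubgroup.index_eq_one.trans toAddSubgroup_eq_top

lemma fg_of_finitePresentation_quotient [Module.Finite R M] (Y : Submodule R M)
    [Module.FinitePresentation R (M ⧸ Y)] : Y.FG := by
  simpa using Module.FinitePresentation.fg_ker Y.mkQ Y.mkQ_surjective

lemma exists_ker_eq_of_isCoatom (hR : FinitelyManySimplesOfEachCard R) (m : ℕ) :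
    ∃ T : Set (Submodule R R), T.Finite ∧ (∀ I ∈ T, Nat.card (R ⧸ I) = m) ∧
      ∀ Y : Submodule R M, IsCoatom Y → Nat.card (M ⧸ Y) = m →
        ∃ I ∈ T, ∃ f : M →ₗ[R] R ⧸ I, LinearMap.ker f = Y := by
  obtain ⟨T, hT, hTiso⟩ := hR m
  refine ⟨{I ∈ T | Nat.card (R ⧸ I) = m}, hT.subset (Set.sep_subset _ _), fun I hI => hI.2, ?_⟩
  intro Y hY hcard
  have : IsSimpleModule R (M ⧸ Y) := isSimpleModule_iff_isCoatom.mpr hY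
  obtain ⟨I₀, hI₀, ⟨e₀⟩⟩ := isSimpleModule_iff_quot_maximal.mp this
  have hI₀card : Nat.card (R ⧸ I₀) = m := (Nat.card_congr e₀.toEquiv).symm.trans hcard
  obtain ⟨I, hIT, ⟨e⟩⟩ := hTiso I₀ hI₀.out hI₀card
  refine ⟨I, ⟨hIT, (Nat.card_congr e.toEquiv).symm.trans hI₀card⟩,
    (e₀ ≪≫ₗ e).toLinearMap ∘ₗ Y.mkQ, ?_⟩
  rw [LinearMap.ker_comp, LinearEquiv.ker, comap_bot, ker_mkQ]

lemma finite_setOf_isCoatom_card_quotient_dvd (hR : FinitelyManySimplesOfEachCard R)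
    [Module.Finite R M] {n : ℕ} (hn : n ≠ 0) :
    {Y : Submodule R M | IsCoatom Y ∧ Nat.card (M ⧸ Y) ∣ n}.Finite := by
  have hdiv : {Y : Submodule R M | IsCoatom Y ∧ Nat.card (M ⧸ Y) ∣ n} ⊆
      ⋃ m ∈ n.divisors, {Y | IsCoatom Y ∧ Nat.card (M ⧸ Y) = m} := by
    rintro Y ⟨hY, hdvd⟩
    exact Set.mem_biUnion (Nat.mem_divisors.mpr ⟨hdvd, hn⟩) ⟨hY, rfl⟩
  refine .subset (.biUnion n.divisors.finite_toSet fun m hm => ?_) hdiv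
  obtain ⟨T, hT, hTcard, hker⟩ := exists_ker_eq_of_isCoatom (M := M) hR m
  have hHom : ∀ I ∈ T, (Set.range fun f : M →ₗ[R] R ⧸ I => LinearMap.ker f).Finite := by
    intro I hI
    have : Finite (R ⧸ I) :=
      Nat.finite_of_card_ne_zero ((hTcard I hI).trans_ne (Nat.pos_of_mem_divisors hm).ne')
    have := Module.Finite.finite_linearMap (R := R) M (R ⧸ I)
    exact Set.finite_range _
  refine .subset (hT.biUnion hHom) fun Y ⟨hY, hcard⟩ => ?_
  obtain ⟨I, hI, f, rfl⟩ := hker Y hY hcard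
  exact Set.mem_biUnion hI ⟨f, rfl⟩

lemma setOf_card_quotient_eq_subset [Module.Finite R M] {n : ℕ} (hn₀ : n ≠ 0) (hn₁ : n ≠ 1) :
    {X : Submodule R M | Nat.card (M ⧸ X) = n} ⊆
      ⋃ Y ∈ {Y : Submodule R M | IsCoatom Y ∧ Nat.card (M ⧸ Y) ∣ n},
        map Y.subtype '' {Z : Submodule R Y | Nat.card (Y ⧸ Z) = n / Nat.card (M ⧸ Y)} := by
  intro X (hX : Nat.card (M ⧸ X) = n)
  obtain ⟨Y, hY, hXY⟩ := (eq_top_or_exists_le_coatom X).resolve_left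
    (mt card_quotient_eq_one_iff.mpr (hX ▸ hn₁))
  have hmul := card_quotient_comap_subtype_mul hXY
  rw [hX] at hmul
  have hm₀ : Nat.card (M ⧸ Y) ≠ 0 := by rintro h; rw [h, mul_zero] at hmul; exact hn₀ hmul.symm
  refine Set.mem_biUnion ⟨hY, Dvd.intro_left _ hmul⟩ ⟨X.comap Y.subtype, ?_, ?_⟩
  · exact Nat.eq_div_of_mul_eq_left hm₀ hmul
  · rw [map_comap_subtype, inf_eq_right.mpr hXY]

theorem finite_setOf_card_quotient_eq
    (hfp : ∀ (S : Type u) [AddCommGroup S] [Module R S], IsSimpleModule R S →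
      Module.FinitePresentation R S)
    (hR : FinitelyManySimplesOfEachCard R) {n : ℕ} (hn : n ≠ 0)
    (M : Type u) [AddCommGroup M] [Module R M] [Module.Finite R M] :
    {X : Submodule R M | Nat.card (M ⧸ X) = n}.Finite := by
  induction n using Nat.strong_induction_on generalizing M with
  | _ n ih =>
  obtain rfl | hn₁ := eq_or_ne n 1
  · exact (Set.finite_singleton ⊤).subset fun X hX => card_quotient_eq_one_iff.mp hX
  refine .subset (.biUnion (finite_setOf_isCoatom_card_quotient_dvd hR hn) ?_)
    (setOf_card_quotient_eq_subset hn hn₁)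
  rintro Y ⟨hY, hdvd⟩
  have := hfp _ (isSimpleModule_iff_isCoatom.mpr hY)
  have : Module.Finite R Y := Module.Finite.iff_fg.mpr Y.fg_of_finitePresentation_quotient
  have hm₁ : Nat.card (M ⧸ Y) ≠ 1 := mt card_quotient_eq_one_iff.mp hY.1
  have hm₀ : Nat.card (M ⧸ Y) ≠ 0 := ne_zero_of_dvd_ne_zero hn hdvd
  have hlt : n / Nat.card (M ⧸ Y) < n := Nat.div_lt_self (by omega) (by omega)
  have hpos : n / Nat.card (M ⧸ Y) ≠ 0 :=
    (Nat.div_pos (Nat.le_of_dvd (by omega) hdvd) (by omega)).ne'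
  exact (ih _ hlt hpos Y).image _

end Submodule

end

theorem stmt_19_general {R : Type u} [Ring R]
    (hfp : ∀ (S : Type u) [AddCommGroup S] [Module R S], IsSimpleModule R S →
      Module.FinitePresentation R S)
    (hiso : ∀ n : ℕ, ∃ T : Set (Submodule R R), T.Finite ∧
      ∀ m : Submodule R R, IsCoatom m → Nat.card (R ⧸ m) = n →
        ∃ m' ∈ T, Nonempty ((R ⧸ m) ≃ₗ[R] (R ⧸ m'))) :
    ∀ (M : Type u) [AddCommGroup M] [Module R M], Module.Finite R M →
      ∀ n : ℕ, 1 ≤ n → {X : Submodule R M | Nat.card (M ⧸ X) = n}.Finite :=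
  fun M _ _ _ _ hn => Submodule.finite_setOf_card_quotient_eq hfp hiso (by omega) M

/-- Let `R` be a left arithmetical ring: every simple left `R`-module is
finite and finitely presented, and for each `n` there are only finitely many isomorphism
classes of simple left `R`-modules of cardinality `n` (equivalently, finitely many
quotients `R/m` by maximal left ideals up to isomorphism). Then for every finitely
generated left `R`-module `M` and every `n ≥ 1`, the set of submodules `X ⊆ M` with
`|M/X| = n` is finite. -/
theorem stmt_19 {R : Type u} [Ring R]
    (hfin : ∀ (S : Type u) [AddCommGroup S] [Module R S], IsSimpleModule R S → Finite S)
    (hfp : ∀ (S : Type u) [AddCommGroup S] [Module R S], IsSimpleModule R S →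
      Module.FinitePresentation R S)
    (hiso : ∀ n : ℕ, ∃ T : Set (Submodule R R), T.Finite ∧
      ∀ m : Submodule R R, IsCoatom m → Nat.card (R ⧸ m) = n →
        ∃ m' ∈ T, Nonempty ((R ⧸ m) ≃ₗ[R] (R ⧸ m'))) :
    ∀ (M : Type u) [AddCommGroup M] [Module R M], Module.Finite R M →
      ∀ n : ℕ, 1 ≤ n → {X : Submodule R M | Nat.card (M ⧸ X) = n}.Finite :=
  stmt_19_general hfp hiso
end
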